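/- arXiv:2306.10629 — 2 statements merged into one kernel-verified Lean document; each statement's English description precedes it below -/
import Mathlib

section
/- For every natural number n, n = r₁₁(n) + v₂(n!) + r₀₁(n), where r₁₁(n) is the number of occurrences of the block 11 in the binary expansion of n, r₀₁(n) is the number of occurrences of the block 01 in the binary expansion of n (including the block containing the most significant digit, i.e., counting an occurrence at the leading 1), and v₂(n!) is the 2-adic valuation of n!. -/
/-- Number of occurrences of the block `11` in the binary expansion of `n`. -/
def r11 (n : ℕ) : ℕ :=
  ((Finset.range n).filter (fun i => n.testBit i = true ∧ n.testBit (i + 1) = true)).card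

/-- Number of occurrences of the block `01` in the binary expansion of `n`,
counting the occurrence at the most significant digit. -/
def r01 (n : ℕ) : ℕ :=
  ((Finset.range n).filter (fun i => n.testBit i = true ∧ n.testBit (i + 1) = false)).card

/-! Every set bit of `n` is followed either by a `1` or by a `0`, so `r11 n + r01 n` is the binary
digit sum `s₂(n)`; Legendre's formula at `p = 2` reads `v₂(n!) = n - s₂(n)`. -/

theorem card_filter_testBit_range_eq_digits_sum {n k : ℕ} (hn : n < 2 ^ k) :
    ((Finset.range k).filter (fun i => n.testBit i = true)).card = (Nat.digits 2 n).sum := by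
  induction k generalizing n with
  | zero => simp_all
  | succ k ih =>
    rcases Nat.eq_zero_or_pos n with rfl | hpos
    · simp
    have hhalf : n / 2 < 2 ^ k := by rw [pow_succ] at hn; omega
    have hlow : (if n.testBit 0 = true then 1 else 0) = n % 2 := by
      rcases Nat.mod_two_eq_zero_or_one n with h | h <;> simp [Nat.testBit_zero, h]
    rw [Nat.digits_def' one_lt_two hpos, List.sum_cons, ← ih hhalf, Finset.card_filter,
      Finset.card_filter, Finset.sum_range_succ', hlow, add_comm]
    simp only [Nat.testBit_add_one]

theorem r11_add_r01 (n : ℕ) : r11 n + r01 n = (Nat.digits 2 n).sum := by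
  rw [← card_filter_testBit_range_eq_digits_sum n.lt_two_pow_self, r11, r01,
    ← Finset.card_filter_add_card_filter_not (s := (Finset.range n).filter (n.testBit · = true))
      (fun i => n.testBit (i + 1) = true),
    Finset.filter_filter, Finset.filter_filter]
  simp only [Bool.not_eq_true]

theorem padicValNat_two_factorial_add_digits_sum (n : ℕ) :
    padicValNat 2 n.factorial + (Nat.digits 2 n).sum = n := by
  have legendre := sub_one_mul_padicValNat_factorial (p := 2) (hp := ⟨Nat.prime_two⟩) n
  have := Nat.digit_sum_le 2 n
  simp only [Nat.add_one_sub_one, one_mul] at legendre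
  omega

theorem stmt_0 (n : ℕ) :
    n = r11 n + padicValNat 2 (Nat.factorial n) + r01 n := by
  have legendre := padicValNat_two_factorial_add_digits_sum n
  have blocks := r11_add_r01 n
  omega
end

section
/- Let Δ(n) = r₀₁(n) − r₀₁(n+1) (as an integer), where r₀₁ counts occurrences of the block 01 in the binary expansion counting the block at the most significant digit. Then for every natural number n, Δ(n) ∈ {−1, 0, 1}. More precisely, writing u = v₂(n+1) and letting ε ∈ {0,1} be such that n+1 ≡ 2^u + ε·2^{u+1} (mod 2^{u+2}): if u = 0 and ε = 0 then Δ(n) = −1; if u = 0 and ε = 1 then Δ(n) = 0; if u > 0 and ε = 0 then Δ(n) = 0; and if u > 0 and ε = 1 then Δ(n) = 1. -/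
lemma r01_sum (n N : ℕ) (h : n ≤ N) :
    r01 n = ∑ i ∈ Finset.range N,
      (if n.testBit i = true ∧ n.testBit (i + 1) = false then 1 else 0) := by
  rw [r01, Finset.card_filter]
  refine Finset.sum_subset (Finset.range_subset_range.2 h) ?_
  intro i hi hin
  simp only [Finset.mem_range, not_lt] at hin
  have : n.testBit i = false := by
    apply Nat.testBit_lt_two_pow
    calc n ≤ i := hin
    _ < 2 ^ i := (Nat.lt_two_pow_self (n := i))
  simp [this]

lemma r01_two_mul (m : ℕ) : r01 (2 * m) = r01 m := by
  rw [r01_sum (2 * m) (2 * m + 1) (by omega), r01_sum m (2 * m) (by omega),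
    Finset.sum_range_succ']
  have h0 : (2 * m).testBit 0 = false := by
    simp [Nat.testBit_zero, Nat.mul_mod_right]
  have hs : ∀ j : ℕ, (2 * m).testBit (j + 1) = m.testBit j := by
    intro j
    rw [Nat.testBit_succ, Nat.mul_div_cancel_left _ (by norm_num)]
  simp [h0, hs]

lemma r01_two_mul_add_one (m : ℕ) :
    r01 (2 * m + 1) = r01 m + (if m % 2 = 0 then 1 else 0) := by
  rw [r01_sum (2 * m + 1) (2 * m + 1) le_rfl, r01_sum m (2 * m) (by omega),
    Finset.sum_range_succ']
  have h0 : (2 * m + 1).testBit 0 = true := by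
    simp [Nat.testBit_zero, Nat.mul_add_mod]
  have hs : ∀ j : ℕ, (2 * m + 1).testBit (j + 1) = m.testBit j := by
    intro j
    rw [Nat.testBit_succ]
    congr 1
    omega
  have h1 : (2 * m + 1).testBit 1 = m.testBit 0 := hs 0
  simp only [hs, h0, h1, Nat.testBit_zero, true_and]
  rcases Nat.even_or_odd m with he | ho
  · have : m % 2 = 0 := Nat.even_iff.1 he
    simp [this]
  · have : m % 2 = 1 := Nat.odd_iff.1 ho
    simp [this]

lemma key : ∀ n : ℕ, (r01 n : ℤ) - r01 (n + 1) =
    (if 2 ∣ (n + 1) then 1 else 0) -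
    (if (n + 1).testBit (padicValNat 2 (n + 1) + 1) = true then 0 else 1) := by
  intro n
  induction n using Nat.strong_induction_on with
  | _ n ih =>
    rcases Nat.even_or_odd n with ⟨m, hm⟩ | ⟨m, hm⟩
    · -- n = 2m, n+1 = 2m+1 odd
      subst hm
      have hmm : m + m = 2 * m := by ring
      rw [hmm, r01_two_mul, r01_two_mul_add_one]
      have hodd : ¬ 2 ∣ (2 * m + 1) := by omega
      have hv : padicValNat 2 (2 * m + 1) = 0 :=
        padicValNat.eq_zero_iff.2 (Or.inr (Or.inr hodd))
      have ht : (2 * m + 1).testBit 1 = m.testBit 0 := by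
        rw [Nat.testBit_succ]
        congr 1
        omega
      rw [hv, if_neg hodd]
      have ht' : (2 * m + 1).testBit (0 + 1) = decide (m % 2 = 1) := by
        rw [show (0 + 1) = 1 from rfl, ht, Nat.testBit_zero]
      rw [ht']
      rcases Nat.even_or_odd m with he | ho
      · have h2 : m % 2 = 0 := Nat.even_iff.1 he
        simp [h2]
      · have h2 : m % 2 = 1 := Nat.odd_iff.1 ho
        simp [h2]
    · -- n = 2m+1, n+1 = 2(m+1)
      subst hm
      haveI : Fact (Nat.Prime 2) := ⟨Nat.prime_two⟩
      have h1 : 2 * m + 1 + 1 = 2 * (m + 1) := by ring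
      rw [h1, r01_two_mul, r01_two_mul_add_one]
      have ihm := ih m (by omega)
      have hv : padicValNat 2 (2 * (m + 1)) = padicValNat 2 (m + 1) + 1 := by
        rw [padicValNat.mul (by norm_num) (by omega), padicValNat.self (by norm_num)]
        omega
      have ht : ∀ j : ℕ, (2 * (m + 1)).testBit (j + 1) = (m + 1).testBit j := by
        intro j
        rw [Nat.testBit_succ, Nat.mul_div_cancel_left _ (by norm_num)]
      have hdvd : 2 ∣ 2 * (m + 1) := ⟨m + 1, rfl⟩
      rw [hv, if_pos hdvd, ht]
      rcases Nat.even_or_odd m with he | ho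
      · have h2 : m % 2 = 0 := Nat.even_iff.1 he
        have hodd : ¬ 2 ∣ (m + 1) := by omega
        rw [if_neg hodd] at ihm
        push_cast
        simp only [h2, if_pos rfl]
        push_cast at ihm ⊢
        linarith [ihm]
      · have h2 : m % 2 = 1 := Nat.odd_iff.1 ho
        have heven : 2 ∣ (m + 1) := by omega
        rw [if_pos heven] at ihm
        rw [h2, if_neg (by norm_num : ¬ (1:ℕ) = 0)]
        push_cast at ihm ⊢
        linarith [ihm]

theorem stmt_4 :
    (∀ n : ℕ, ((r01 n : ℤ) - (r01 (n + 1) : ℤ)) ∈ ({-1, 0, 1} : Set ℤ)) ∧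
    (∀ n u ε : ℕ, ε = 0 ∨ ε = 1 → u = padicValNat 2 (n + 1) →
      (n + 1) % 2 ^ (u + 2) = 2 ^ u + ε * 2 ^ (u + 1) →
      ((u = 0 ∧ ε = 0 → (r01 n : ℤ) - (r01 (n + 1) : ℤ) = -1) ∧
       (u = 0 ∧ ε = 1 → (r01 n : ℤ) - (r01 (n + 1) : ℤ) = 0) ∧
       (0 < u ∧ ε = 0 → (r01 n : ℤ) - (r01 (n + 1) : ℤ) = 0) ∧
       (0 < u ∧ ε = 1 → (r01 n : ℤ) - (r01 (n + 1) : ℤ) = 1))) := by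
  constructor
  · intro n
    rw [key n]
    split_ifs <;> simp
  · intro n u ε hε hu hmod
    -- testBit at position u+1 equals (ε = 1)
    have tb : (n + 1).testBit (u + 1) = decide (ε = 1) := by
      have h := Nat.testBit_mod_two_pow (n + 1) (u + 2) (u + 1)
      rw [hmod] at h
      simp only [show u + 1 < u + 2 by omega, decide_true, Bool.true_and] at h
      rw [← h]
      rcases hε with rfl | rfl
      · simp only [zero_mul, add_zero]
        rw [Nat.testBit_two_pow_of_ne (by omega)]
        simp
      · simp only [one_mul]
        rw [Nat.testBit_eq_decide_div_mod_eq]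
        have hdv : (2 ^ u + 2 ^ (u + 1)) / 2 ^ (u + 1) = 1 := by
          rw [Nat.add_div_right _ (by positivity),
            Nat.div_eq_of_lt (Nat.pow_lt_pow_right (by norm_num) (by omega))]
        simp [hdv]
    have hzero : u = 0 ↔ ¬ 2 ∣ (n + 1) := by
      rw [hu, padicValNat.eq_zero_iff]
      omega
    refine ⟨?_, ?_, ?_, ?_⟩ <;> rintro ⟨h1, h2⟩ <;> subst h2 <;>
      rw [key n, ← hu, tb] <;> simp only [decide_eq_true_eq]
    · rw [if_neg (hzero.1 h1), if_neg (by norm_num)]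
      norm_num
    · rw [if_neg (hzero.1 h1)]
      norm_num
    · have hd : 2 ∣ (n + 1) := by
        by_contra hc
        exact absurd (hzero.2 hc) (by omega)
      rw [if_pos hd, if_neg (by norm_num)]
      norm_num
    · have hd : 2 ∣ (n + 1) := by
        by_contra hc
        exact absurd (hzero.2 hc) (by omega)
      rw [if_pos hd]
      norm_num
end
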